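/- Let a, b, z ∈ ℂ and suppose F₄(z) = 0, where F₄(X) = (2a+1)X² + (2b − 2ab − 2a − a²)X + b² + 2ab. Then (X − z)² divides the polynomial G(X) = X·F₁(X)²·F₂(z)² − z·F₁(z)²·F₂(X)² in ℂ[X], where F₁(X) = X² + (2a + 2b + a²)X + 2ab + b² and F₂(X) = (2a+1)X² + (a² + 2ab + 2b)X + b². -/

import Mathlib

open Polynomial

/-- `F₁(X) = X² + (2a + 2b + a²)X + 2ab + b²` as a polynomial over `ℂ`. -/
noncomputable def F₁ (a b : ℂ) : Polynomial ℂ :=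
  X ^ 2 + C (2 * a + 2 * b + a ^ 2) * X + C (2 * a * b + b ^ 2)

/-- `F₂(X) = (2a+1)X² + (a² + 2ab + 2b)X + b²` as a polynomial over `ℂ`. -/
noncomputable def F₂ (a b : ℂ) : Polynomial ℂ :=
  C (2 * a + 1) * X ^ 2 + C (a ^ 2 + 2 * a * b + 2 * b) * X + C (b ^ 2)

/-!
The derivative of `φ = X·F₁²/F₂²` is `F₁·W/F₂³` with `W = F₂·(F₁ + 2X·F₁') − 2X·F₁·F₂'`, and `W`
factors as `F₄·(X² + (2b − a²)X + b²)`. Hence at a root `z` of `F₄` the numerator of `φ(X) − φ(z)`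
vanishes together with its derivative, i.e. it has a double root at `z`.
-/

theorem Polynomial.X_sub_C_sq_dvd_of_isRoot_of_isRoot_derivative {R : Type*} [CommRing R]
    {p : R[X]} {t : R} (h₀ : p.IsRoot t) (h₁ : (derivative p).IsRoot t) : (X - C t) ^ 2 ∣ p := by
  rcases eq_or_ne p 0 with rfl | hp
  · exact dvd_zero _
  · rw [← le_rootMultiplicity_iff hp]
    exact (one_lt_rootMultiplicity_iff_isRoot hp).2 ⟨h₀, h₁⟩

section ramification

variable {R : Type*} [CommRing R]

/-- The derivative of `X·f²/g²` is `f · ramificationNumerator f g / g³`. -/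
noncomputable def ramificationNumerator (f g : R[X]) : R[X] :=
  g * (f + 2 * X * derivative f) - 2 * X * f * derivative g

variable (f g : R[X]) (z : R)

theorem isRoot_X_mul_sq_mul_sub_C_mul_sq :
    (X * f ^ 2 * C (g.eval z ^ 2) - C z * C (f.eval z ^ 2) * g ^ 2).IsRoot z := by
  simp only [IsRoot, eval_sub, eval_mul, eval_pow, eval_X, eval_C]
  ring

theorem eval_derivative_X_mul_sq_mul_sub_C_mul_sq :
    (derivative (X * f ^ 2 * C (g.eval z ^ 2) - C z * C (f.eval z ^ 2) * g ^ 2)).eval z =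
      f.eval z * g.eval z * (ramificationNumerator f g).eval z := by
  simp only [ramificationNumerator, derivative_sub, derivative_mul, derivative_X, derivative_C,
    derivative_pow, eval_sub, eval_add, eval_mul, eval_pow, eval_X, eval_C, eval_one, eval_zero,
    eval_ofNat]
  ring

end ramification

noncomputable def F₄ (a b : ℂ) : ℂ[X] :=
  C (2 * a + 1) * X ^ 2 + C (2 * b - 2 * a * b - 2 * a - a ^ 2) * X + C (b ^ 2 + 2 * a * b)

theorem ramificationNumerator_F₁_F₂ (a b : ℂ) :
    ramificationNumerator (F₁ a b) (F₂ a b) =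
      F₄ a b * (X ^ 2 + C (2 * b - a ^ 2) * X + C (b ^ 2)) := by
  simp only [ramificationNumerator, F₁, F₂, F₄, derivative_add, derivative_mul, derivative_C,
    derivative_X, derivative_X_sq]
  simp only [map_add, map_sub, map_mul, map_pow, map_ofNat, map_one]
  ring

/-- Let `a, b, z ∈ ℂ` with `F₄(z) = 0`, where
`F₄(X) = (2a+1)X² + (2b − 2ab − 2a − a²)X + b² + 2ab`.  Then `(X − z)²` divides the
polynomial `G(X) = X·F₁(X)²·F₂(z)² − z·F₁(z)²·F₂(X)²` in `ℂ[X]`. -/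
theorem sq_dvd_numerator (a b z : ℂ)
    (hF4 : (2 * a + 1) * z ^ 2 + (2 * b - 2 * a * b - 2 * a - a ^ 2) * z
        + b ^ 2 + 2 * a * b = 0) :
    (X - C z) ^ 2 ∣
      X * (F₁ a b) ^ 2 * C (((F₂ a b).eval z) ^ 2)
        - C z * C (((F₁ a b).eval z) ^ 2) * (F₂ a b) ^ 2 := by
  have hz : (F₄ a b).eval z = 0 := by
    simp only [F₄, eval_add, eval_mul, eval_pow, eval_C, eval_X]
    linear_combination hF4
  refine X_sub_C_sq_dvd_of_isRoot_of_isRoot_derivative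
    (isRoot_X_mul_sq_mul_sub_C_mul_sq _ _ z) ?_
  rw [IsRoot, eval_derivative_X_mul_sq_mul_sub_C_mul_sq, ramificationNumerator_F₁_F₂, eval_mul, hz,
    zero_mul, mul_zero]
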